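/- arXiv:1711.01150 — 2 statements merged into one kernel-verified Lean document; each statement's English description precedes it below -/
import Mathlib

section
/- Let r ≥ 2 and n ≥ 1 be integers, set m = (r-1)n, and let w = e^{2πi/r}. Suppose x_1, ..., x_m are complex numbers such that R_{rn+1}(X) = ∏_{k=1}^{m} ∏_{l=0}^{r-1} (X - x_k w^l). Then ∑_{k=1}^{m} x_k^r = -C_r(rn - 1, 1). -/
/-!
Near its top degree, the recurrence for `R_{N+2}` only sees the two terms `X^{r-1} R_{N+1}` and
`X^{r-2} R_N`. Hence `R_{N+1}` has leading coefficient `1` in degree `(r-1)N`, and its coefficient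
in degree `(r-1)N - r` grows at each step by the leading coefficient of `R_N`, so it equals `N - 1`.
On the other hand `X^r - a^r = ∏_l (X - a w^l)` turns the factorisation of `R_{rn+1}` into
`R_{rn+1}(X) = P(X^r)` with `P = ∏_k (X - x_k^r)`, whose coefficient in degree `m - 1` is
`-∑_k x_k^r`. Finally `C_r(N, 1) = N`.
-/

noncomputable def RBon (r : ℕ) : ℕ → Polynomial ℂ
  | 0 => 0
  | 1 => 1
  | n + 2 => ∑ i ∈ (Finset.range r).attach,
      Polynomial.X ^ (i : ℕ) * RBon r (n + 2 - (r - (i : ℕ)))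
  decreasing_by
    have h := i.2
    rw [Finset.mem_range] at h
    omega

noncomputable def rnomial (r n j : ℕ) : ℕ :=
  ((∑ i ∈ Finset.range r, (Polynomial.X : Polynomial ℕ) ^ i) ^ n).coeff j

open Polynomial

lemma RBon_add_two (r N : ℕ) :
    RBon r (N + 2) = ∑ i ∈ Finset.range r, X ^ i * RBon r (N + 2 - (r - i)) := by
  rw [RBon]
  exact Finset.sum_attach _ fun i => X ^ i * RBon r (N + 2 - (r - i))

lemma natDegree_RBon_le (r M : ℕ) : (RBon r M).natDegree ≤ (r - 1) * (M - 1) := by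
  induction M using Nat.strong_induction_on with
  | _ M ih =>
    match M with
    | 0 => simp [RBon]
    | 1 => simp [RBon]
    | K + 2 =>
      rw [RBon_add_two]
      refine natDegree_sum_le_of_forall_le _ _ fun i hi => natDegree_mul_le.trans ?_
      have hi : i < r := Finset.mem_range.mp hi
      have hrec := ih (K + 2 - (r - i)) (by omega)
      have hmono := Nat.mul_le_mul_left (r - 1) (show K + 2 - (r - i) - 1 ≤ K by omega)
      have hsucc : (r - 1) * (K + 2 - 1) = (r - 1) * K + (r - 1) := mul_add_one _ _
      rw [natDegree_X_pow]
      omega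

/-- The terms `X^i R_{N+2-(r-i)}` with `i < r - 2` have degree below `(r-1)(N-2) + (r-2)`. -/
lemma coeff_RBon_add_two {r : ℕ} (hr : 2 ≤ r) {N k : ℕ} (hk : (r - 1) * (N - 2) + (r - 2) ≤ k) :
    (RBon r (N + 2)).coeff k =
      (X ^ (r - 1) * RBon r (N + 1)).coeff k + (X ^ (r - 2) * RBon r N).coeff k := by
  have hsub : ({r - 2, r - 1} : Finset ℕ) ⊆ Finset.range r := by
    intro i hi
    simp only [Finset.mem_insert, Finset.mem_singleton] at hi
    rcases hi with rfl | rfl <;> exact Finset.mem_range.mpr (by omega)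
  rw [RBon_add_two, finsetSum_coeff, ← Finset.sum_subset hsub]
  · rw [Finset.sum_pair (by omega), add_comm, show N + 2 - (r - (r - 1)) = N + 1 by omega,
      show N + 2 - (r - (r - 2)) = N by omega]
  · intro i hi hne
    simp only [Finset.mem_range, Finset.mem_insert, Finset.mem_singleton, not_or] at hi hne
    refine coeff_eq_zero_of_natDegree_lt (natDegree_mul_le.trans_lt ?_)
    have hdeg := natDegree_RBon_le r (N + 2 - (r - i))
    have hmono := Nat.mul_le_mul_left (r - 1) (show N + 2 - (r - i) - 1 ≤ N - 2 by omega)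
    rw [natDegree_X_pow]
    omega

lemma coeff_RBon_succ_leading {r : ℕ} (hr : 2 ≤ r) (N : ℕ) :
    (RBon r (N + 1)).coeff ((r - 1) * N) = 1 := by
  induction N with
  | zero => simp [RBon]
  | succ N ih =>
    have hmono := Nat.mul_le_mul_left (r - 1) (N.sub_le 2)
    have hlow : (RBon r N).natDegree < (r - 1) * N + 1 :=
      (natDegree_RBon_le r N).trans_lt
        (Nat.lt_succ_of_le (Nat.mul_le_mul_left (r - 1) (N.sub_le 1)))
    rw [mul_add_one, coeff_RBon_add_two hr (by omega), coeff_X_pow_mul, ih,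
      show (r - 1) * N + (r - 1) = ((r - 1) * N + 1) + (r - 2) by omega, coeff_X_pow_mul,
      coeff_eq_zero_of_natDegree_lt hlow, add_zero]

lemma coeff_RBon_succ_subleading {r : ℕ} (hr : 2 ≤ r) {N : ℕ} (hN : 2 ≤ N) :
    (RBon r (N + 1)).coeff ((r - 1) * N - r) = (N : ℂ) - 1 := by
  induction N, hN using Nat.le_induction with
  | base =>
    rw [show (r - 1) * 2 - r = r - 2 by omega, coeff_RBon_add_two hr (by omega),
      coeff_X_pow_mul', if_neg (by omega)]
    norm_num [RBon]
  | succ N hN ih =>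
    have hmono := Nat.mul_le_mul_left (r - 1) hN
    have hmono' := Nat.mul_le_mul_left (r - 1) (show N - 2 ≤ N - 1 by omega)
    have hpred : (r - 1) * N = (r - 1) * (N - 1) + (r - 1) := by
      rw [← mul_add_one, Nat.sub_add_cancel (by omega)]
    have htop := coeff_RBon_succ_leading hr (N - 1)
    rw [Nat.sub_add_cancel (by omega)] at htop
    rw [show (r - 1) * (N + 1) - r = ((r - 1) * N - r) + (r - 1) by rw [mul_add_one]; omega,
      coeff_RBon_add_two hr (by omega), coeff_X_pow_mul, ih,
      show (r - 1) * N - r + (r - 1) = (r - 1) * (N - 1) + (r - 2) by omega, coeff_X_pow_mul, htop]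
    push_cast
    ring

lemma IsPrimitiveRoot.prod_X_sub_C_mul_pow_eq_expand {R : Type*} [CommRing R] [IsDomain R] {w : R} {r : ℕ}
    (hw : IsPrimitiveRoot w r) (hr : 0 < r) (a : R) :
    ∏ l ∈ Finset.range r, (X - C (a * w ^ l)) = expand R r (X - C (a ^ r)) := by
  rw [map_sub, expand_X, expand_C, X_pow_sub_C_eq_prod hw hr rfl]
  exact Finset.prod_congr rfl fun l _ => by rw [mul_comm]

lemma rnomial_one {r : ℕ} (hr : 2 ≤ r) (N : ℕ) : rnomial r N 1 = N := by
  have hcoeff : ∀ k < r, (∑ i ∈ Finset.range r, (X : ℕ[X]) ^ i).coeff k = 1 := fun k hk => by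
    simp [coeff_X_pow, hk]
  rw [rnomial, ← Polynomial.coeff_coe, Polynomial.coe_pow, PowerSeries.coeff_one_pow,
    Polynomial.coeff_coe, Polynomial.constantCoeff_coe, hcoeff 1 (by omega), hcoeff 0 (by omega)]
  simp

theorem stmt_3 (r n : ℕ) (hr : 2 ≤ r) (hn : 1 ≤ n)
    (m : ℕ) (hm : m = (r - 1) * n)
    (w : ℂ) (hw : w = Complex.exp (2 * Real.pi * Complex.I / r))
    (x : Fin m → ℂ)
    (hfac : RBon r (r * n + 1) =
      ∏ k : Fin m, ∏ l ∈ Finset.range r,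
        (Polynomial.X - Polynomial.C (x k * w ^ l))) :
    ∑ k : Fin m, x k ^ r = -(rnomial r (r * n - 1) 1 : ℂ) := by
  have hm_pos : 0 < m := hm ▸ Nat.mul_pos (by omega) hn
  have hrn : 2 ≤ r * n := le_trans hr (Nat.le_mul_of_pos_right r hn)
  have hprim : IsPrimitiveRoot w r := hw ▸ Complex.isPrimitiveRoot_exp r (by omega)
  have hexpand : RBon r (r * n + 1) = expand ℂ r (∏ k : Fin m, (X - C (x k ^ r))) := by
    rw [hfac, map_prod]
    exact Finset.prod_congr rfl fun k _ => hprim.prod_X_sub_C_mul_pow_eq_expand (by omega) (x k)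
  have hvieta : (∏ k : Fin m, (X - C (x k ^ r))).coeff (m - 1) = -∑ k, x k ^ r := by
    simpa using prod_X_sub_C_coeff_card_pred Finset.univ (fun k : Fin m => x k ^ r) (by simpa)
  have hdeg : (r - 1) * (r * n) - r = r * (m - 1) := by
    rw [hm, Nat.mul_sub_one, mul_left_comm]
  have hcoeff := coeff_RBon_succ_subleading hr hrn
  rw [hdeg, hexpand, coeff_expand_mul' (by omega), hvieta] at hcoeff
  rw [rnomial_one hr, Nat.cast_sub (by omega)]
  push_cast at hcoeff ⊢
  linear_combination -hcoeff
end

section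
/- Let r ≥ 2 and n ≥ 1 be integers with (r-1)n ≥ 3, let p ∈ {0, 1, ..., r-1}, and set t = r(r-1)n - 2r - (1-p)(r-1), D = (r-1)(rn+p-1), and μ = D(D-1)···(D-t+1) (the falling factorial of D of length t, which is a positive integer). Define ψ₂ = -((D-r)(D-r-1)···(D-r-t+1)/μ)·C_r(rn+p-2, 1) and υ₂ = (t!/μ)·C_r(rn+p-3, 2). Then every complex root x of the t-th derivative R_{rn+p}^{(t)} satisfies (x^r)^2 - ψ₂·x^r + υ₂ = 0; in particular x^r = (ψ₂ + √(ψ₂² - 4υ₂))/2 or x^r = (ψ₂ - √(ψ₂² - 4υ₂))/2. -/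
open Polynomial Finset

theorem Polynomial.reflect_sum {R ι : Type*} [Semiring R] (N : ℕ) (s : Finset ι) (f : ι → R[X]) :
    reflect N (∑ i ∈ s, f i) = ∑ i ∈ s, reflect N (f i) :=
  map_sum (⟨⟨reflect N, reflect_zero⟩, fun f g => reflect_add f g N⟩ : R[X] →+ R[X]) f s

theorem Polynomial.iterate_derivative_reflect_expand {R : Type*} [CommSemiring R] {r : ℕ}
    (hr : 0 < r) (t : ℕ) {f : R[X]} (hf : f.natDegree * r ≤ t + 2 * r) :
    derivative^[t] (reflect (t + 2 * r) (expand R r f)) =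
      C (((t + 2 * r).descFactorial t : R) * f.coeff 0) * X ^ (2 * r) +
        C (((t + r).descFactorial t : R) * f.coeff 1) * X ^ r +
          C ((t.factorial : R) * f.coeff 2) := by
  ext d
  simp only [coeff_iterate_derivative, coeff_reflect, coeff_add, coeff_C_mul_X_pow, coeff_C,
    nsmul_eq_mul]
  by_cases hd : d ≤ 2 * r
  · rw [revAt_le (by omega), show t + 2 * r - (d + t) = 2 * r - d by omega]
    by_cases hdvd : r ∣ 2 * r - d
    · obtain ⟨j, hj⟩ := hdvd
      have hj2 : j ≤ 2 := by
        by_contra! h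
        nlinarith [Nat.sub_le (2 * r) d, Nat.mul_le_mul_left r h]
      rw [hj, coeff_expand_mul' hr]
      interval_cases j
      · rw [show d = 2 * r by omega]
        simp [show 2 * r ≠ r by omega, show 2 * r ≠ 0 by omega, add_comm]
      · rw [show d = r by omega]
        simp [show r ≠ 2 * r by omega, show r ≠ 0 by omega, add_comm]
      · rw [show d = 0 by omega]
        simp [show 0 ≠ 2 * r by omega, show 0 ≠ r by omega, Nat.descFactorial_self]
    · have hd' : d ≠ 2 * r ∧ d ≠ r ∧ d ≠ 0 := by
        refine ⟨?_, ?_, ?_⟩ <;> rintro rfl <;> simp_all [Nat.two_mul]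
      simp [coeff_expand hr, hdvd, hd']
  · rw [revAt_eq_self_of_lt (by omega),
      coeff_eq_zero_of_natDegree_lt (by rw [natDegree_expand]; omega)]
    simp [show d ≠ 2 * r by omega, show d ≠ r by omega, show d ≠ 0 by omega]

theorem rnomial_zero_right {r : ℕ} (hr : 0 < r) (N : ℕ) : rnomial r N 0 = 1 := by
  simp [rnomial, coeff_zero_eq_eval_zero, eval_finsetSum, hr.ne']

theorem rnomial_zero_left {r j : ℕ} (hj : j ≠ 0) : rnomial r 0 j = 0 := by
  simp [rnomial, coeff_one, hj]

theorem rnomial_succ (r N j : ℕ) :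
    rnomial r (N + 1) j = ∑ k ∈ range r, if k ≤ j then rnomial r N (j - k) else 0 := by
  simp only [rnomial, pow_succ', Finset.sum_mul, finsetSum_coeff, coeff_X_pow_mul']

theorem rnomial_eq_zero_of_lt {r N j : ℕ} (h : (r - 1) * N < j) : rnomial r N j = 0 := by
  refine coeff_eq_zero_of_natDegree_lt (natDegree_pow_le.trans_lt ?_)
  refine lt_of_le_of_lt (Nat.mul_le_mul_left N (natDegree_sum_le_of_forall_le _ _ fun i hi => ?_))
    (by rwa [mul_comm])
  rw [natDegree_X_pow]
  exact Nat.le_sub_one_of_lt (mem_range.mp hi)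

noncomputable def rnomialDiagonal (r m : ℕ) : ℂ[X] :=
  ∑ j ∈ range m, C (rnomial r (m - 1 - j) j : ℂ) * X ^ j

theorem coeff_rnomialDiagonal (r m j : ℕ) :
    (rnomialDiagonal r m).coeff j = if j < m then (rnomial r (m - 1 - j) j : ℂ) else 0 := by
  simp [rnomialDiagonal, finsetSum_coeff, coeff_X_pow]

theorem rnomialDiagonal_succ_succ (r n : ℕ) :
    rnomialDiagonal r (n + 2) = ∑ k ∈ range r, X ^ k * rnomialDiagonal r (n + 1 - k) := by
  ext j
  simp only [finsetSum_coeff, coeff_X_pow_mul', coeff_rnomialDiagonal]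
  rcases lt_or_ge n j with hj | hj
  · rw [Finset.sum_eq_zero fun k _ => by split_ifs <;> first | rfl | omega]
    split_ifs with hj'
    · rw [show j = n + 1 by omega, show n + 2 - 1 - (n + 1) = 0 by omega,
        rnomial_zero_left (by omega), Nat.cast_zero]
    · rfl
  · rw [if_pos (by omega), show n + 2 - 1 - j = n - j + 1 by omega, rnomial_succ, Nat.cast_sum]
    refine Finset.sum_congr rfl fun k _ => ?_
    split_ifs with hkj hjk
    · rw [show n + 1 - k - 1 - (j - k) = n - j by omega]
    · omega
    · exact Nat.cast_zero

theorem natDegree_rnomialDiagonal_mul_le (r m : ℕ) :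
    (rnomialDiagonal r m).natDegree * r ≤ (r - 1) * (m - 1) := by
  rcases Nat.eq_zero_or_pos r with rfl | hr
  · simp
  rw [← Nat.le_div_iff_mul_le hr, natDegree_le_iff_coeff_eq_zero]
  intro j hj
  rw [Nat.div_lt_iff_lt_mul hr] at hj
  rw [coeff_rnomialDiagonal]
  split_ifs with hjm
  · have hsplit : (r - 1) * (m - 1 - j) + (r - 1) * j = (r - 1) * (m - 1) := by
      rw [← Nat.mul_add, Nat.sub_add_cancel (by omega)]
    have hrj : (r - 1) * j + j = j * r := by
      rw [mul_comm j, ← Nat.succ_mul, Nat.succ_eq_add_one, Nat.sub_add_cancel hr]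
    rw [rnomial_eq_zero_of_lt (by omega), Nat.cast_zero]
  · rfl

theorem RBon_succ_succ (r n : ℕ) :
    RBon r (n + 2) = ∑ k ∈ range r, X ^ (r - 1 - k) * RBon r (n + 1 - k) := by
  rw [RBon.eq_3, Finset.sum_attach (range r) fun i => X ^ i * RBon r (n + 2 - (r - i)),
    ← sum_range_reflect]
  refine Finset.sum_congr rfl fun k hk => ?_
  have := mem_range.mp hk
  congr 2
  omega

theorem RBon_eq_reflect_expand {r : ℕ} (hr : 0 < r) (m : ℕ) :
    RBon r m = reflect ((r - 1) * (m - 1)) (expand ℂ r (rnomialDiagonal r m)) := by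
  induction m using Nat.strong_induction_on with
  | _ m ih =>
  match m with
  | 0 => simp [RBon, rnomialDiagonal]
  | 1 => simp [RBon, rnomialDiagonal, rnomial_zero_right hr]
  | n + 2 =>
    rw [RBon_succ_succ, rnomialDiagonal_succ_succ, map_sum, reflect_sum]
    refine Finset.sum_congr rfl fun k hk => ?_
    have hkr := mem_range.mp hk
    rcases Nat.eq_zero_or_pos (n + 1 - k) with h0 | hpos
    · simp [h0, RBon, rnomialDiagonal]
    have hN : (r - 1) * (n + 2 - 1) = (r - 1) * (k + 1) + (r - 1) * (n + 1 - k - 1) := by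
      rw [← Nat.mul_add]; congr 1; omega
    have hrk : (r - 1) * (k + 1) = r * k + (r - 1 - k) := by
      zify [hr, show k ≤ r - 1 by omega]
      ring
    rw [ih _ (by omega), hN, map_mul, map_pow, expand_X, ← pow_mul,
      reflect_mul _ _ (by rw [natDegree_X_pow]; omega)
        (by rw [natDegree_expand]; exact natDegree_rnomialDiagonal_mul_le r _),
      reflect_monomial, revAt_le (by omega)]
    congr 2
    omega

theorem Complex.eq_or_eq_of_sq_sub_mul_add_eq_zero {ψ υ y : ℂ} (h : y ^ 2 - ψ * y + υ = 0) :
    y = (ψ + (ψ ^ 2 - 4 * υ) ^ ((1 : ℂ) / 2)) / 2 ∨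
      y = (ψ - (ψ ^ 2 - 4 * υ) ^ ((1 : ℂ) / 2)) / 2 := by
  have hsq : ((ψ ^ 2 - 4 * υ) ^ ((1 : ℂ) / 2)) ^ 2 = ψ ^ 2 - 4 * υ := by simp
  have hs : discrim 1 (-ψ) υ =
      (ψ ^ 2 - 4 * υ) ^ ((1 : ℂ) / 2) * (ψ ^ 2 - 4 * υ) ^ ((1 : ℂ) / 2) := by
    rw [← sq, hsq, discrim]
    ring
  have := (quadratic_eq_zero_iff one_ne_zero hs y).mp (by linear_combination h)
  simpa [sub_eq_add_neg, neg_neg] using this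

theorem stmt_11_general (r n : ℕ) (hr : 2 ≤ r) (h3 : 3 ≤ (r - 1) * n)
    (p : ℕ)
    (t : ℕ)
    (ht : (t : ℤ) = (r : ℤ) * ((r : ℤ) - 1) * n - 2 * r - (1 - (p : ℤ)) * ((r : ℤ) - 1))
    (D : ℕ) (hD : D = (r - 1) * (r * n + p - 1))
    (μ : ℕ) (hμ : μ = D.descFactorial t)
    (ψ υ : ℂ)
    (hψ : ψ = -(((D - r).descFactorial t : ℂ) / (μ : ℂ)) * (rnomial r (r * n + p - 2) 1 : ℂ))
    (hυ : υ = ((t.factorial : ℂ) / (μ : ℂ)) * (rnomial r (r * n + p - 3) 2 : ℂ)) :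
    ∀ x : ℂ, (Polynomial.derivative^[t] (RBon r (r * n + p))).IsRoot x →
      (x ^ r) ^ 2 - ψ * x ^ r + υ = 0 ∧
        (x ^ r = (ψ + (ψ ^ 2 - 4 * υ) ^ ((1 : ℂ) / 2)) / 2 ∨
         x ^ r = (ψ - (ψ ^ 2 - 4 * υ) ^ ((1 : ℂ) / 2)) / 2) := by
  intro x hx
  have hm : 3 ≤ r * n + p := by
    have := Nat.mul_le_mul_right n (Nat.sub_le r 1)
    omega
  have hDt : t + 2 * r = D := by
    have : (D : ℤ) = ((r : ℤ) - 1) * ((r : ℤ) * n + p - 1) := by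
      rw [hD]
      push_cast [show 1 ≤ r by omega, show 1 ≤ r * n + p by omega]
      ring
    exact_mod_cast (by push_cast; linear_combination ht - this : ((t + 2 * r : ℕ) : ℤ) = D)
  have hμ0 : (μ : ℂ) ≠ 0 := by
    rw [hμ, Nat.cast_ne_zero, Ne, Nat.descFactorial_eq_zero_iff_lt]
    omega
  have hdeg : (rnomialDiagonal r (r * n + p)).natDegree * r ≤ t + 2 * r :=
    hDt ▸ hD ▸ natDegree_rnomialDiagonal_mul_le r _
  rw [RBon_eq_reflect_expand (by omega), ← hD, ← hDt,
    iterate_derivative_reflect_expand (by omega) t hdeg] at hx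
  simp only [IsRoot, eval_add, eval_mul, eval_C, eval_pow, eval_X, coeff_rnomialDiagonal,
    if_pos (show 0 < r * n + p by omega), if_pos (show 1 < r * n + p by omega),
    if_pos (show 2 < r * n + p by omega), Nat.sub_zero, rnomial_zero_right (show 0 < r by omega)]
    at hx
  have hquad : (x ^ r) ^ 2 - ψ * x ^ r + υ = 0 := by
    rw [hψ, hυ, hμ, ← hDt, show t + 2 * r - r = t + r by omega]
    field_simp
    linear_combination hx
  exact ⟨hquad, Complex.eq_or_eq_of_sq_sub_mul_add_eq_zero hquad⟩

theorem stmt_11 (r n : ℕ) (hr : 2 ≤ r) (hn : 1 ≤ n) (h3 : 3 ≤ (r - 1) * n)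
    (p : ℕ) (hp : p ≤ r - 1)
    (t : ℕ)
    (ht : (t : ℤ) = (r : ℤ) * ((r : ℤ) - 1) * n - 2 * r - (1 - (p : ℤ)) * ((r : ℤ) - 1))
    (D : ℕ) (hD : D = (r - 1) * (r * n + p - 1))
    (μ : ℕ) (hμ : μ = D.descFactorial t)
    (ψ υ : ℂ)
    (hψ : ψ = -(((D - r).descFactorial t : ℂ) / (μ : ℂ)) * (rnomial r (r * n + p - 2) 1 : ℂ))
    (hυ : υ = ((t.factorial : ℂ) / (μ : ℂ)) * (rnomial r (r * n + p - 3) 2 : ℂ)) :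
    ∀ x : ℂ, (Polynomial.derivative^[t] (RBon r (r * n + p))).IsRoot x →
      (x ^ r) ^ 2 - ψ * x ^ r + υ = 0 ∧
        (x ^ r = (ψ + (ψ ^ 2 - 4 * υ) ^ ((1 : ℂ) / 2)) / 2 ∨
         x ^ r = (ψ - (ψ ^ 2 - 4 * υ) ^ ((1 : ℂ) / 2)) / 2) :=
  stmt_11_general r n hr h3 p t ht D hD μ hμ ψ υ hψ hυ
end
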